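/- arXiv:2510.25763 — 8 statements merged into one kernel-verified Lean document; each statement's English description precedes it below -/
import Mathlib

section
/- Let G = K ⋊ H be a semidirect product of finite groups where H acts freely on K (i.e., the stabilizer in H of every nontrivial element of K is trivial), with H a p-group and K of order coprime to p. Then G contains no element of order pq for any prime q ≠ p. -/
open Pointwise in
theorem stmt4 (p : ℕ) (hp : p.Prime) (K H : Type*) [Group K] [Group H]
    [Finite K] [Finite H] (φ : H →* MulAut K)
    (hfree : ∀ k : K, k ≠ 1 → ∀ h : H, φ h k = k → h = 1)
    (hH : IsPGroup p H) (hK : Nat.Coprime (Nat.card K) p) :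
    ∀ g : K ⋊[φ] H, ∀ q : ℕ, q.Prime → q ≠ p → orderOf g ≠ p * q := by
  intro g q hq hqp hord
  haveI : Fact p.Prime := ⟨hp⟩
  haveI : Fact q.Prime := ⟨hq⟩
  -- G is finite
  have e : (K ⋊[φ] H) ≃ K × H := ⟨fun x => (x.left, x.right), fun x => ⟨x.1, x.2⟩,
    fun x => rfl, fun x => rfl⟩
  haveI : Finite (K ⋊[φ] H) := Finite.of_equiv _ e.symm
  have hcardG : Nat.card (K ⋊[φ] H) = Nat.card K * Nat.card H := by
    rw [Nat.card_congr e, Nat.card_prod]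
  -- the elements a = g^q (order p) and b = g^p (order q)
  set a := g ^ q with ha
  set b := g ^ p with hb
  have hgn : ∀ n : ℕ, 0 < n → n < p * q → g ^ n ≠ 1 := by
    intro n hn hnlt hone
    have hd : p * q ∣ n := hord ▸ orderOf_dvd_of_pow_eq_one hone
    have := Nat.le_of_dvd hn hd
    omega
  have hqlt : q < p * q := by
    have := hp.one_lt; have := hq.pos; nlinarith
  have hplt : p < p * q := by
    have := hq.one_lt; have := hp.pos; nlinarith
  have hane : a ≠ 1 := hgn q hq.pos hqlt
  have hbne : b ≠ 1 := hgn p hp.pos hplt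
  have haord : orderOf a = p := by
    refine orderOf_eq_prime ?_ hane
    rw [ha, ← pow_mul, mul_comm, ← hord, pow_orderOf_eq_one]
  have hbord : orderOf b = q := by
    refine orderOf_eq_prime ?_ hbne
    rw [hb, ← pow_mul, ← hord, pow_orderOf_eq_one]
  -- b lies in K
  have hbK : SemidirectProduct.rightHom b = 1 := by
    set h := SemidirectProduct.rightHom b with hh
    obtain ⟨n, hn⟩ := hH h
    have h1 : orderOf h ∣ p ^ n := orderOf_dvd_of_pow_eq_one hn
    have h2 : orderOf h ∣ q := by
      rw [← hbord]; exact orderOf_map_dvd _ b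
    have hcop : Nat.Coprime (p ^ n) q :=
      Nat.Coprime.pow_left _ ((Nat.coprime_primes hp hq).mpr (Ne.symm hqp))
    have : orderOf h = 1 := Nat.eq_one_of_dvd_coprimes hcop h1 h2
    rwa [orderOf_eq_one_iff] at this
  -- the subgroup inr.range is a Sylow p-subgroup
  set HR := (SemidirectProduct.inr : H →* K ⋊[φ] H).range with hHR
  have hHRp : IsPGroup p HR :=
    hH.of_equiv (MonoidHom.ofInjective (SemidirectProduct.inr_injective (φ := φ)))
  have hHRcard : Nat.card HR = Nat.card H :=
    Nat.card_congr (MonoidHom.ofInjective (SemidirectProduct.inr_injective (φ := φ))).toEquiv.symm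
  have hindex : HR.index = Nat.card K := by
    have h1 := Subgroup.card_mul_index HR
    rw [hHRcard, hcardG, mul_comm (Nat.card K)] at h1
    exact Nat.eq_of_mul_eq_mul_left Nat.card_pos h1
  have hnd : ¬ p ∣ HR.index := by
    rw [hindex]
    exact (Nat.Prime.coprime_iff_not_dvd hp).mp hK.symm
  set Q : Sylow p (K ⋊[φ] H) := hHRp.toSylow hnd with hQ
  -- ⟨a⟩ is a p-group, so it is contained in some Sylow, conjugate to Q
  have hza : IsPGroup p (Subgroup.zpowers a) :=
    IsPGroup.of_card (by rw [Nat.card_zpowers, haord, pow_one])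
  obtain ⟨R, hR⟩ := hza.exists_le_sylow
  obtain ⟨x, hx⟩ := MulAction.exists_smul_eq (K ⋊[φ] H) R Q
  have haR : a ∈ R := hR (Subgroup.mem_zpowers a)
  have haQ : x * a * x⁻¹ ∈ Q := by
    rw [← hx]
    have hmem : x * a * x⁻¹ ∈ MulAut.conj x • (R : Set (K ⋊[φ] H)) :=
      ⟨a, haR, rfl⟩
    rwa [← Sylow.coe_smul] at hmem
  obtain ⟨h₀, hh₀⟩ : ∃ h₀ : H, SemidirectProduct.inr h₀ = x * a * x⁻¹ := haQ
  -- the conjugate of b lies in K and is nontrivial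
  have hb'K : SemidirectProduct.rightHom (x * b * x⁻¹) = 1 := by
    rw [map_mul, map_mul, map_inv, hbK, mul_one, mul_inv_cancel]
  obtain ⟨k₁, hk₁⟩ : ∃ k₁ : K, SemidirectProduct.inl k₁ = x * b * x⁻¹ := by
    have hmem : x * b * x⁻¹ ∈ (SemidirectProduct.inl : K →* K ⋊[φ] H).range := by
      rw [SemidirectProduct.range_inl_eq_ker_rightHom]
      exact hb'K
    exact hmem
  have hk₁ne : k₁ ≠ 1 := by
    intro h1
    apply hbne
    have h2 : x * b * x⁻¹ = 1 := by rw [← hk₁, h1, map_one]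
    have h3 := congrArg (fun y => x⁻¹ * y * x) h2
    simpa [mul_assoc] using h3
  -- a and b commute, hence so do their conjugates
  have hcomm : (x * a * x⁻¹) * (x * b * x⁻¹) = (x * b * x⁻¹) * (x * a * x⁻¹) := by
    have hab : a * b = b * a := by
      rw [ha, hb, ← pow_add, ← pow_add, Nat.add_comm]
    calc (x * a * x⁻¹) * (x * b * x⁻¹) = x * (a * b) * x⁻¹ := by group
    _ = x * (b * a) * x⁻¹ := by rw [hab]
    _ = (x * b * x⁻¹) * (x * a * x⁻¹) := by group
  -- so h₀ fixes k₁, hence h₀ = 1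
  have hfix : φ h₀ k₁ = k₁ := by
    apply SemidirectProduct.inl_injective (φ := φ)
    rw [SemidirectProduct.inl_aut, hk₁, map_inv, hh₀, hcomm, mul_inv_cancel_right]
  have hh₀1 : h₀ = 1 := hfree k₁ hk₁ne h₀ hfix
  -- contradiction: a = 1
  apply hane
  have h2 : x * a * x⁻¹ = 1 := by rw [← hh₀, hh₀1, map_one]
  have h3 := congrArg (fun y => x⁻¹ * y * x) h2
  simpa [mul_assoc] using h3
end

section
/- Let G be a finite group with no element of order pq for a prime q ≠ p, let S be a Sylow p-subgroup of G, N = N_G(S) its normalizer, and W = N/S the Weyl group. Then the conjugation action of W on S is free: if x ∈ N satisfies x s x⁻¹ = s for some nontrivial s ∈ S, then x ∈ S. -/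
open Subgroup

section

variable {p : ℕ} {G : Type*} [Group G]

theorem Sylow.mem_of_mem_normalizer_of_isPGroup_zpowers (P : Sylow p G) {x : G}
    (hx : x ∈ normalizer (P : Set G)) (hpx : IsPGroup p (zpowers x)) : x ∈ P := by
  have hx' : x ∈ zpowers x ⊓ normalizer (P : Set G) := ⟨mem_zpowers x, hx⟩
  rw [hpx.inf_normalizer_sylow P] at hx'
  exact hx'.2

theorem Sylow.exists_orderOf_pow_eq_prime [Fact p.Prime] [Finite G] (P : Sylow p G) {s : G}
    (hs : s ∈ P) (hs1 : s ≠ 1) : ∃ n : ℕ, orderOf (s ^ n) = p := by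
  obtain ⟨k, hk⟩ := IsPGroup.iff_orderOf.mp P.isPGroup' ⟨s, hs⟩
  rw [Subgroup.orderOf_mk] at hk
  have hk0 : k ≠ 0 := by
    rintro rfl
    exact hs1 (orderOf_eq_one_iff.mp (by simpa using hk))
  exact ⟨_, orderOf_pow_orderOf_div (orderOf_pos s).ne' (hk ▸ dvd_pow_self p hk0)⟩

/-- If `x` had a prime divisor `q ≠ p` in its order, `s * x ^ (orderOf x / q)` would have order
`p * q`. -/
theorem isPGroup_zpowers_of_commute_of_orderOf_eq_prime [Fact p.Prime] [Finite G]
    (hG : ∀ g : G, ∀ q : ℕ, q.Prime → q ≠ p → orderOf g ≠ p * q) {x s : G}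
    (hs : orderOf s = p) (hxs : Commute x s) : IsPGroup p (zpowers x) := by
  have hx0 : orderOf x ≠ 0 := (orderOf_pos x).ne'
  refine IsPGroup.of_card (Nat.card_zpowers x ▸ Nat.eq_prime_pow_of_unique_prime_dvd hx0 ?_)
  intro q hq hqx
  by_contra hqp
  have hy : orderOf (x ^ (orderOf x / q)) = q := orderOf_pow_orderOf_div hx0 hqx
  have hcop : (orderOf s).Coprime (orderOf (x ^ (orderOf x / q))) := by
    rw [hs, hy]
    exact (Nat.coprime_primes Fact.out hq).mpr (Ne.symm hqp)
  apply hG _ q hq hqp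
  rw [(hxs.symm.pow_right _).orderOf_mul_eq_mul_orderOf_of_coprime hcop, hs, hy]

end

theorem stmt7 (p : ℕ) [Fact p.Prime] (G : Type*) [Group G] [Finite G]
    (hiso : ∀ g : G, ∀ q : ℕ, q.Prime → q ≠ p → orderOf g ≠ p * q)
    (S : Sylow p G) :
    ∀ x ∈ Subgroup.normalizer ((S : Subgroup G) : Set G), ∀ s ∈ (S : Subgroup G), s ≠ 1 →
      x * s * x⁻¹ = s → x ∈ (S : Subgroup G) := by
  intro x hx s hs hs1 hconj
  have hxs : Commute x s := mul_inv_eq_iff_eq_mul.mp hconj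
  obtain ⟨n, hn⟩ := S.exists_orderOf_pow_eq_prime hs hs1
  exact S.mem_of_mem_normalizer_of_isPGroup_zpowers hx
    (isPGroup_zpowers_of_commute_of_orderOf_eq_prime hiso hn (hxs.pow_right n))
end

section
/- Let G be a finite group with no element of order pq for any prime q ≠ p, and suppose a Sylow p-subgroup S of G is abelian. Then S is a trivial intersection subgroup: for all g ∈ G, either g normalizes S or S ∩ gSg⁻¹ is trivial. -/
/-!
Suppose `S ⊓ gSg⁻¹ ≠ ⊥` and pick `z` of order `p` in it. An element of prime order `q ≠ p`
commuting with `z` would give `z * w` of order `pq`, so the centralizer of `z` is a `p`-group.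
Both `S` and `gSg⁻¹` are abelian and contain `z`, hence lie in that centralizer; by maximality
of Sylow subgroups they coincide, i.e. `g` normalizes `S`.
-/

open Subgroup

section

variable {p : ℕ} {G : Type*} [Group G]

theorem IsPGroup.of_forall_orderOf_prime [Finite G]
    (h : ∀ (g : G) (q : ℕ), q.Prime → orderOf g = q → q = p) : IsPGroup p G := by
  refine IsPGroup.of_card (Nat.eq_prime_pow_of_unique_prime_dvd Nat.card_pos.ne' fun hq hqG ↦ ?_)
  obtain ⟨g, hg⟩ := exists_prime_orderOf_dvd_card' _ (hp := ⟨hq⟩) hqG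
  exact h g _ hq hg

theorem IsPGroup.exists_orderOf_eq_prime [Fact p.Prime] [Finite G] [Nontrivial G]
    (hG : IsPGroup p G) : ∃ g : G, orderOf g = p := by
  obtain ⟨n, hn, hcard⟩ := hG.nontrivial_iff_card.mp ‹_›
  exact exists_prime_orderOf_dvd_card' p (hcard ▸ dvd_pow_self p hn.ne')

theorem isPGroup_centralizer_of_orderOf_eq [Fact p.Prime] [Finite G]
    (hG : ∀ g : G, ∀ q : ℕ, q.Prime → q ≠ p → orderOf g ≠ p * q)
    {z : G} (hz : orderOf z = p) : IsPGroup p (centralizer {z}) := by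
  refine IsPGroup.of_forall_orderOf_prime fun w q hq hw ↦ ?_
  by_contra hqp
  rw [← orderOf_coe] at hw
  have hcomm : Commute z w := (mem_centralizer_singleton_iff.mp w.2).symm
  have hcop : (orderOf z).Coprime (orderOf (w : G)) := by
    rw [hz, hw]
    exact (Nat.coprime_primes Fact.out hq).mpr (Ne.symm hqp)
  apply hG (z * w) q hq hqp
  rw [hcomm.orderOf_mul_eq_mul_orderOf_of_coprime hcop, hz, hw]

theorem Sylow.eq_of_le_of_isPGroup {P Q : Sylow p G} {H : Subgroup G} (hH : IsPGroup p H)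
    (hP : (P : Subgroup G) ≤ H) (hQ : (Q : Subgroup G) ≤ H) : P = Q :=
  Sylow.ext ((P.is_maximal' hH hP).symm.trans (Q.is_maximal' hH hQ))

theorem Subgroup.le_centralizer_singleton_of_mem {K : Subgroup G} [IsMulCommutative K] {z : G}
    (hz : z ∈ K) : K ≤ centralizer {z} :=
  (le_centralizer K).trans (centralizer_le (Set.singleton_subset_iff.mpr hz))

end

theorem stmt8 (p : ℕ) [Fact p.Prime] (G : Type*) [Group G] [Finite G]
    (hiso : ∀ g : G, ∀ q : ℕ, q.Prime → q ≠ p → orderOf g ≠ p * q)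
    (S : Sylow p G) (hab : IsMulCommutative (S : Subgroup G)) :
    ∀ g : G, g ∈ Subgroup.normalizer ((S : Subgroup G) : Set G) ∨
      (S : Subgroup G) ⊓ (S : Subgroup G).map (MulAut.conj g).toMonoidHom = ⊥ := by
  intro g
  set T := (S : Subgroup G).map (MulAut.conj g).toMonoidHom
  refine or_iff_not_imp_right.mpr fun hST ↦ ?_
  have : Nontrivial ((S : Subgroup G) ⊓ T :) := (nontrivial_iff_ne_bot _).mpr hST
  obtain ⟨z, hz⟩ := (S.isPGroup'.to_inf_left (K := T)).exists_orderOf_eq_prime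
  obtain ⟨hzS, hzT⟩ := mem_inf.mp z.2
  rw [← orderOf_coe] at hz
  have : IsMulCommutative T := map_isMulCommutative _ _
  -- `↑(g • S)` unfolds to `T`, so `S` and `g • S` are compared inside the centralizer of `z`.
  refine Sylow.smul_eq_iff_mem_normalizer.mp ?_
  exact Sylow.eq_of_le_of_isPGroup (isPGroup_centralizer_of_orderOf_eq hiso hz)
    (le_centralizer_singleton_of_mem (K := T) hzT) (le_centralizer_singleton_of_mem hzS)
end

section
/- Let G be a finite group with no element of order pq for a prime q ≠ p, and S an abelian Sylow p-subgroup. Then for every nontrivial x ∈ S, the centralizer C_G(x) equals S. -/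
/-!
If `x` has `p`-power order and `g` commutes with `x`, then for every prime `q` dividing the order
of `g`, suitable powers of `x` and `g` are commuting elements of orders `p` and `q`; their product
has order `p * q` unless `q = p`. So the centralizer of `x` is a `p`-group. When `x` lies in an
abelian Sylow `p`-subgroup `S`, that centralizer contains `S`, hence equals it by maximality.
-/

section

variable {G : Type*} [Group G] {p : ℕ}

theorem eq_of_commute_of_orderOf_eq_prime
    (hiso : ∀ g : G, ∀ q : ℕ, q.Prime → q ≠ p → orderOf g ≠ p * q)
    {a b : G} (hab : Commute a b) (hp : p.Prime) (ha : orderOf a = p)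
    {q : ℕ} (hq : q.Prime) (hb : orderOf b = q) : q = p := by
  by_contra hqp
  have hcop : (orderOf a).Coprime (orderOf b) := by
    rw [ha, hb]
    exact (Nat.coprime_primes hp hq).mpr (Ne.symm hqp)
  apply hiso (a * b) q hq hqp
  rw [hab.orderOf_mul_eq_mul_orderOf_of_coprime hcop, ha, hb]

theorem isPGroup_centralizer_of_dvd_orderOf [Finite G] [Fact p.Prime]
    (hiso : ∀ g : G, ∀ q : ℕ, q.Prime → q ≠ p → orderOf g ≠ p * q)
    {x : G} (hpx : p ∣ orderOf x) : IsPGroup p (Subgroup.centralizer {x}) := by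
  rw [IsPGroup.iff_orderOf]
  rintro ⟨g, hg⟩
  rw [Subgroup.orderOf_mk]
  have hgx : Commute x g := (Subgroup.mem_centralizer_singleton_iff.mp hg).symm
  refine ⟨_, Nat.eq_prime_pow_of_unique_prime_dvd (orderOf_pos g).ne' fun hq hqg => ?_⟩
  exact eq_of_commute_of_orderOf_eq_prime hiso (hgx.pow_pow _ _) Fact.out
    (orderOf_pow_orderOf_div (orderOf_pos x).ne' hpx) hq
    (orderOf_pow_orderOf_div (orderOf_pos g).ne' hqg)

end

theorem stmt9 (p : ℕ) [Fact p.Prime] (G : Type*) [Group G] [Finite G]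
    (hiso : ∀ g : G, ∀ q : ℕ, q.Prime → q ≠ p → orderOf g ≠ p * q)
    (S : Sylow p G) (hab : IsMulCommutative (S : Subgroup G)) :
    ∀ x ∈ (S : Subgroup G), x ≠ 1 → Subgroup.centralizer {x} = (S : Subgroup G) := by
  intro x hxS hx1
  have hpx : p ∣ orderOf x := by
    simpa using S.isPGroup'.dvd_orderOf (g := ⟨x, hxS⟩) (by simpa using hx1)
  have hSC : (S : Subgroup G) ≤ Subgroup.centralizer {x} :=
    (Subgroup.le_centralizer _).trans (Subgroup.centralizer_le (Set.singleton_subset_iff.mpr hxS))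
  exact S.is_maximal' (isPGroup_centralizer_of_dvd_orderOf hiso hpx) hSC
end

section
/- If G is a finite group admitting a faithful transitive action on a set of size at most p+1, where p is prime, then G contains no element of order pq for any prime q ≠ p, and the Sylow p-subgroups of G have order dividing p. -/
open MulAction

private lemma aux_shift {G X : Type*} [Group G] [MulAction G X] (g : G) (x : X) (i n : ℕ) :
    g ^ n • (g ^ i • x) = g ^ i • x ↔ g ^ n • x = x := by
  rw [smul_smul, ← pow_add, Nat.add_comm, pow_add, mul_smul, smul_left_cancel_iff]

private lemma period_pow_smul {G X : Type*} [Group G] [Finite G] [MulAction G X]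
    (g : G) (x : X) (i : ℕ) : period g (g ^ i • x) = period g x := by
  refine Nat.dvd_antisymm ?_ ?_
  · rw [← pow_smul_eq_iff_period_dvd, aux_shift, pow_period_smul]
  · rw [← pow_smul_eq_iff_period_dvd, ← aux_shift g x i, pow_period_smul]

private lemma period_inj {G X : Type*} [Group G] [MulAction G X] (g : G) (x : X)
    {i j : ℕ} (hi : i < period g x) (hj : j < period g x) (h : g ^ i • x = g ^ j • x) :
    i = j := by
  wlog hij : i ≤ j generalizing i j
  · exact (this hj hi h.symm (le_of_not_ge hij)).symm
  by_contra hne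
  have hlt : i < j := lt_of_le_of_ne hij hne
  have : g ^ (j - i) • x = x := by
    have : g ^ (j - i) • (g ^ i • x) = g ^ i • x := by
      rw [smul_smul, ← pow_add, Nat.sub_add_cancel hij, h]
    rwa [aux_shift] at this
  exact pow_smul_ne_of_lt_period (Nat.sub_pos_of_lt hlt)
    (lt_of_le_of_lt (Nat.sub_le j i) hj) this

theorem stmt10 (p : ℕ) [Fact p.Prime] (G : Type*) [Group G] [Finite G]
    (X : Type*) [Finite X] [MulAction G X] [FaithfulSMul G X]
    [MulAction.IsPretransitive G X] (hX : Nat.card X ≤ p + 1) :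
    (∀ g : G, ∀ q : ℕ, q.Prime → q ≠ p → orderOf g ≠ p * q) ∧
      ∀ S : Sylow p G, Nat.card (S : Subgroup G) ∣ p := by
  have hp : p.Prime := Fact.out
  constructor
  · intro g q hq hqp hord
    have hp2 : 2 ≤ p := hp.two_le
    have hq2 : 2 ≤ q := hq.two_le
    have hpq : p + 1 < p * q := by nlinarith
    -- period of any point divides p*q and is ≤ card X ≤ p+1, hence < p*q
    have hper_dvd : ∀ x : X, period g x ∣ p * q := fun x => hord ▸ period_dvd_orderOf g x
    have hper_pos : ∀ x : X, 0 < period g x := fun x =>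
      period_pos_of_orderOf_pos (by rw [hord]; positivity) x
    have hper_le : ∀ x : X, period g x ≤ Nat.card X := by
      intro x
      have hinj : Function.Injective (fun i : Fin (period g x) => g ^ (i : ℕ) • x) := by
        intro i j hij
        exact Fin.ext (period_inj g x i.2 j.2 hij)
      simpa using Nat.card_le_card_of_injective _ hinj
    have hper_ne : ∀ x : X, period g x ≠ p * q := fun x h =>
      absurd (h ▸ le_trans (hper_le x) hX) (not_le.mpr hpq)
    -- dichotomy
    by_cases hcase : ∀ x : X, period g x ∣ q
    · have : g ^ q = 1 := by
        apply eq_of_smul_eq_smul (α := X)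
        intro x
        rw [one_smul, pow_smul_eq_iff_period_dvd]
        exact hcase x
      have := orderOf_dvd_of_pow_eq_one this
      rw [hord] at this
      have := Nat.le_of_dvd (by omega) this
      nlinarith
    · push_neg at hcase
      obtain ⟨x, hx⟩ := hcase
      -- period g x is divisible by p (else it divides q)
      have hxp : period g x = p := by
        have hdvd : p ∣ period g x := by
          by_contra hnd
          exact hx (Nat.Coprime.dvd_of_dvd_mul_left
            (hp.coprime_iff_not_dvd.mpr hnd).symm (hper_dvd x))
        obtain ⟨m, hm⟩ := hdvd
        have hmq : m ∣ q := by
          have := hper_dvd x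
          rw [hm] at this
          exact (Nat.mul_dvd_mul_iff_left hp.pos).mp this
        rcases (Nat.Prime.eq_one_or_self_of_dvd hq m hmq) with h1 | h1
        · simp [hm, h1]
        · exfalso; exact hper_ne x (by rw [hm, h1])
      -- now: is there a point with period divisible by q?
      by_cases hcase2 : ∀ y : X, period g y ∣ p
      · have : g ^ p = 1 := by
          apply eq_of_smul_eq_smul (α := X)
          intro y
          rw [one_smul, pow_smul_eq_iff_period_dvd]
          exact hcase2 y
        have := orderOf_dvd_of_pow_eq_one this
        rw [hord] at this
        have := Nat.le_of_dvd hp.pos this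
        nlinarith
      · push_neg at hcase2
        obtain ⟨y, hy⟩ := hcase2
        have hyq : period g y = q := by
          have hdvd : q ∣ period g y := by
            by_contra hnd
            exact hy (Nat.Coprime.dvd_of_dvd_mul_right
              (hq.coprime_iff_not_dvd.mpr hnd).symm (hper_dvd y))
          obtain ⟨m, hm⟩ := hdvd
          have hmp : m ∣ p := by
            have := hper_dvd y
            rw [hm, mul_comm p q] at this
            exact (Nat.mul_dvd_mul_iff_left hq.pos).mp this
          rcases (Nat.Prime.eq_one_or_self_of_dvd hp m hmp) with h1 | h1
          · simp [hm, h1]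
          · exfalso
            exact hper_ne y (by rw [hm, h1, mul_comm])
        -- build injective map Fin p ⊕ Fin q → X
        have hinj : Function.Injective
            (fun z : Fin p ⊕ Fin q => Sum.elim
              (fun i : Fin p => g ^ (i : ℕ) • x) (fun j : Fin q => g ^ (j : ℕ) • y) z) := by
          rintro (i | i) (j | j) h <;> simp only [Sum.elim_inl, Sum.elim_inr] at h
          · exact congrArg Sum.inl (Fin.ext (period_inj g x (hxp ▸ i.2) (hxp ▸ j.2) h))
          · exfalso
            have : period g y = period g x := by
              rw [← period_pow_smul g y (j : ℕ), ← h, period_pow_smul]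
            rw [hxp, hyq] at this
            exact hqp this
          · exfalso
            have : period g y = period g x := by
              rw [← period_pow_smul g y (i : ℕ), h, period_pow_smul]
            rw [hxp, hyq] at this
            exact hqp this
          · exact congrArg Sum.inr (Fin.ext (period_inj g y (hyq ▸ i.2) (hyq ▸ j.2) h))
        have := Nat.card_le_card_of_injective _ hinj
        rw [Nat.card_eq_fintype_card, Fintype.card_sum, Fintype.card_fin,
          Fintype.card_fin] at this
        omega
  · intro S
    -- G embeds into Perm X, so |G| divides (card X)! which divides (p+1)!
    have hp : p.Prime := Fact.out
    have hGdvd : Nat.card G ∣ Nat.card (Equiv.Perm X) :=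
      Subgroup.card_dvd_of_injective (MulAction.toPermHom G X)
        (by
          intro a b hab
          apply eq_of_smul_eq_smul (α := X)
          intro x
          exact congrFun (congrArg (fun e => e.toFun) hab) x)
    have hX' : Nat.card (Equiv.Perm X) = Nat.factorial (Nat.card X) := by
      have : Fintype X := Fintype.ofFinite X
      have : DecidableEq X := Classical.decEq X
      rw [Nat.card_eq_fintype_card, Nat.card_eq_fintype_card, Fintype.card_perm]
    have hdvd : Nat.card G ∣ Nat.factorial (p + 1) := by
      rw [hX'] at hGdvd
      exact hGdvd.trans (Nat.factorial_dvd_factorial hX)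
    obtain ⟨k, hk⟩ := IsPGroup.iff_card.mp S.2
    have hSdvd : Nat.card (S : Subgroup G) ∣ Nat.card G := Subgroup.card_subgroup_dvd_card _
    rw [hk] at hSdvd ⊢
    -- show k ≤ 1
    have hk1 : k ≤ 1 := by
      by_contra hk1
      push_neg at hk1
      have hpp : p ^ 2 ∣ Nat.factorial (p + 1) :=
        dvd_trans (pow_dvd_pow p hk1) (hSdvd.trans hdvd)
      have : Nat.factorial (p + 1) = (p + 1) * Nat.factorial p := by
        rw [Nat.factorial_succ]
      rw [this] at hpp
      have hcop1 : Nat.Coprime p (p + 1) := by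
        rw [Nat.add_comm, Nat.coprime_add_self_right]
        exact Nat.coprime_one_right p
      have hcop : Nat.Coprime (p ^ 2) (p + 1) := hcop1.pow_left 2
      have hpp2 : p ^ 2 ∣ Nat.factorial p := hcop.dvd_of_dvd_mul_left hpp
      obtain ⟨m, rfl⟩ : ∃ m, p = m + 1 := ⟨p - 1, (Nat.succ_pred_eq_of_pos hp.pos).symm⟩
      have hfac : Nat.factorial (m + 1) = (m + 1) * Nat.factorial m := Nat.factorial_succ m
      rw [hfac, pow_two] at hpp2
      have h1 := (Nat.mul_dvd_mul_iff_left hp.pos).mp hpp2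
      have h2 := (Nat.Prime.dvd_factorial hp).mp h1
      omega
    exact pow_dvd_pow p hk1 |>.trans (by rw [pow_one])
end

section
/- For an odd prime p and n ≤ p+2, the alternating group A_n contains no element of order pq for any prime q ≠ p. -/
lemma aux_prime_dvd_lcm12 {p : ℕ} (hp : p.Prime) (s : Multiset ℕ) (h : p ∣ s.lcm) :
    ∃ a ∈ s, p ∣ a := by
  induction s using Multiset.induction_on with
  | empty => simp [Nat.dvd_one, hp.ne_one] at h
  | cons a s ih =>
    rw [Multiset.lcm_cons] at h
    have hmul : p ∣ a * s.lcm := h.trans (lcm_dvd (dvd_mul_right _ _) (dvd_mul_left _ _))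
    rcases hp.dvd_mul.mp hmul with h1 | h2
    · exact ⟨a, Multiset.mem_cons_self _ _, h1⟩
    · obtain ⟨b, hb, hpb⟩ := ih h2
      exact ⟨b, Multiset.mem_cons_of_mem hb, hpb⟩

theorem stmt12 (p n : ℕ) (hp : p.Prime) (hodd : Odd p) (hn : n ≤ p + 2) :
    ∀ g : alternatingGroup (Fin n), ∀ q : ℕ, q.Prime → q ≠ p → orderOf g ≠ p * q := by
  intro g q hq hqp hord
  have hp2 : p ≠ 2 := by rintro rfl; exact (by decide : ¬ Odd 2) hodd
  have hp3 : 3 ≤ p := lt_of_le_of_ne hp.two_le (Ne.symm hp2)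
  set f : Equiv.Perm (Fin n) := (g : Equiv.Perm (Fin n)) with hfdef
  have hfo : orderOf f = p * q := by
    rw [hfdef, orderOf_submonoid]; exact hord
  have hlcm : f.cycleType.lcm = p * q := by
    rw [Equiv.Perm.lcm_cycleType, hfo]
  have hsum : f.cycleType.sum ≤ p + 2 := by
    rw [Equiv.Perm.sum_cycleType]
    calc f.support.card ≤ Fintype.card (Fin n) := Finset.card_le_univ _
      _ = n := Fintype.card_fin n
      _ ≤ p + 2 := hn
  obtain ⟨c, hc, hpc⟩ := aux_prime_dvd_lcm12 hp f.cycleType (hlcm ▸ dvd_mul_right p q)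
  have hc2 : 2 ≤ c := Equiv.Perm.two_le_of_mem_cycleType hc
  have hcle : c ≤ p + 2 :=
    le_trans (Multiset.single_le_sum (fun x _ => Nat.zero_le x) c hc) hsum
  obtain ⟨k, rfl⟩ := hpc
  have hk : k = 1 := by nlinarith
  subst hk
  rw [mul_one] at hc hc2 hcle
  set s := f.cycleType.erase p with hs
  have hcons : f.cycleType = p ::ₘ s := (Multiset.cons_erase hc).symm
  have hssum : s.sum ≤ 2 := by
    have := hsum
    rw [hcons, Multiset.sum_cons] at this
    omega
  have hall2 : ∀ a ∈ s, a = 2 := by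
    intro a ha
    have h2a : 2 ≤ a :=
      Equiv.Perm.two_le_of_mem_cycleType (Multiset.mem_of_mem_erase ha)
    have : a ≤ s.sum := Multiset.single_le_sum (fun x _ => Nat.zero_le x) a ha
    omega
  have hslcm : s.lcm ∣ 2 := Multiset.lcm_dvd.mpr (fun a ha => by rw [hall2 a ha])
  have hlcm2 : Nat.lcm p s.lcm = p * q := by
    rw [← hlcm, hcons, Multiset.lcm_cons]; rfl
  have hdvd : p * q ∣ p * 2 := by
    rw [← hlcm2]
    exact dvd_trans (lcm_dvd (dvd_mul_right _ _) (Dvd.dvd.mul_left hslcm p)) dvd_rfl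
  have hq2 : q = 2 := by
    have hqd : q ∣ 2 := (mul_dvd_mul_iff_left (by omega : p ≠ 0)).mp hdvd
    have := Nat.le_of_dvd (by norm_num) hqd
    have := hq.two_le
    omega
  subst hq2
  -- s is nonempty
  have hsne : s ≠ 0 := by
    rintro h0
    rw [h0] at hlcm2
    simp [Nat.lcm] at hlcm2
    omega
  obtain ⟨a, ha⟩ := Multiset.exists_mem_of_ne_zero hsne
  have ha2 : a = 2 := hall2 a ha
  subst ha2
  have hsum2 : s.sum = 2 := by
    have : 2 ≤ s.sum := Multiset.single_le_sum (fun x _ => Nat.zero_le x) 2 ha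
    omega
  have hcard : Multiset.card s = 1 := by
    have hrep : s = Multiset.replicate (Multiset.card s) 2 :=
      (Multiset.eq_replicate_card).mpr hall2
    have : s.sum = Multiset.card s * 2 := by
      rw [hrep, Multiset.sum_replicate, smul_eq_mul]
      simp
    omega
  -- compute sign
  have hsign : Equiv.Perm.sign f = (-1 : ℤˣ) ^ (f.cycleType.sum + Multiset.card f.cycleType) :=
    Equiv.Perm.sign_of_cycleType f
  have hsum' : f.cycleType.sum = p + 2 := by rw [hcons, Multiset.sum_cons, hsum2]
  have hcard' : Multiset.card f.cycleType = 2 := by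
    rw [hcons, Multiset.card_cons, hcard]
  have hoddexp : Odd (f.cycleType.sum + Multiset.card f.cycleType) := by
    rw [hsum', hcard']
    obtain ⟨m, hm⟩ := hodd
    exact ⟨m + 2, by omega⟩
  have hsneg : Equiv.Perm.sign f = -1 := by
    rw [hsign, hoddexp.neg_one_pow]
  have hmem : Equiv.Perm.sign f = 1 := Equiv.Perm.mem_alternatingGroup.mp g.2
  rw [hmem] at hsneg
  exact absurd hsneg (by decide)
end

section
/- In the symmetric group Σ_p (p prime), the normalizer of a Sylow p-subgroup S has order p(p−1); equivalently, the Weyl group N_{Σ_p}(S)/S has order p−1. -/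
/-!
A Sylow `p`-subgroup `S` of `Σ_p` has order `p`, so it is generated by an element `σ` of order
`p`, i.e. a `p`-cycle. Conjugation gives `N(S) → Aut(S)` with kernel the centralizer of `S`.
The centralizer of a `p`-cycle has order `p`, so the kernel is `S` itself. The map is onto
because an automorphism of `S` sends `σ` to another `p`-cycle, which is conjugate to `σ` in
`Σ_p`, and any such conjugating element normalizes `S`. Hence `N(S)/S ≃ Aut(C_p)`, which has
order `φ(p) = p - 1`.
-/

open Equiv Equiv.Perm Subgroup

theorem Nat.factorization_factorial_self {p : ℕ} (hp : p.Prime) :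
    p.factorial.factorization p = 1 := by
  simpa using Nat.factorization_factorial_mul (n := 1) hp

namespace Subgroup

variable {G : Type*} [Group G]

theorem zpowers_map_mulAut_eq {g : G} (φ : MulAut (zpowers g)) :
    zpowers (φ ⟨g, mem_zpowers g⟩ : G) = zpowers g := by
  refine le_antisymm (zpowers_le.mpr (φ _).2) (zpowers_le.mpr ?_)
  obtain ⟨k, hk⟩ := mem_zpowers_iff.mp (φ.symm ⟨g, mem_zpowers g⟩).2
  have hsymm : φ.symm ⟨g, mem_zpowers g⟩ = ⟨g, mem_zpowers g⟩ ^ k := Subtype.ext hk.symm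
  rw [MulEquiv.symm_apply_eq, map_zpow] at hsymm
  exact mem_zpowers_iff.mpr ⟨k, congrArg Subtype.val hsymm.symm⟩

theorem normalizerMonoidHom_zpowers_surjective {g : G}
    (h : ∀ φ : MulAut (zpowers g), IsConj g (φ ⟨g, mem_zpowers g⟩)) :
    Function.Surjective (zpowers g).normalizerMonoidHom := by
  intro φ
  obtain ⟨c, hc⟩ := isConj_iff.mp (h φ)
  have hcN : c ∈ normalizer (zpowers g : Set G) := by
    rw [mem_normalizer_iff_map_conj_eq, MonoidHom.map_zpowers]
    simpa only [MonoidHom.coe_coe, MulAut.conj_apply, hc] using zpowers_map_mulAut_eq φ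
  refine ⟨⟨c, hcN⟩, MulEquiv.ext fun y => ?_⟩
  obtain ⟨k, hk⟩ := mem_zpowers_iff.mp y.2
  rw [show y = ⟨g, mem_zpowers g⟩ ^ k from Subtype.ext hk.symm, map_zpow, map_zpow]
  exact congrArg (· ^ k) (Subtype.ext hc)

noncomputable def normalizerQuotientMulEquivMulAut {H : Subgroup G}
    (hC : centralizer (H : Set G) = H) (hs : Function.Surjective H.normalizerMonoidHom) :
    normalizer (H : Set G) ⧸ H.subgroupOf (normalizer (H : Set G)) ≃* MulAut H :=
  (QuotientGroup.quotientMulEquivOfEq (by rw [normalizerMonoidHom_ker, hC])).trans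
    (QuotientGroup.quotientKerEquivOfSurjective _ hs)

end Subgroup

namespace Equiv.Perm

variable {α : Type*} [Fintype α]

theorem card_sylow_eq_of_card_eq {p : ℕ} [Fact p.Prime] (hα : Fintype.card α = p)
    (S : Sylow p (Perm α)) : Nat.card S = p := by
  rw [S.card_eq_multiplicity, Nat.card_perm, Nat.card_eq_fintype_card, hα,
    Nat.factorization_factorial_self Fact.out, pow_one]

variable [DecidableEq α]

theorem cycleType_eq_singleton_card_of_orderOf_eq {σ : Perm α} (hp : (Fintype.card α).Prime)
    (h : orderOf σ = Fintype.card α) : σ.cycleType = {Fintype.card α} := by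
  have hc := isCycle_of_prime_order'' hp h
  rw [hc.cycleType, ← hc.orderOf, h]

theorem centralizer_singleton_eq_zpowers {σ : Perm α} (h : σ.cycleType = {Fintype.card α}) :
    centralizer {σ} = zpowers σ := by
  symm
  refine eq_of_le_of_card_ge (zpowers_le.mpr (mem_centralizer_singleton_iff.mpr rfl)) ?_
  rw [nat_card_centralizer, Nat.card_zpowers, ← lcm_cycleType, h]
  simp

section

variable {σ : Perm α} (hp : (Fintype.card α).Prime) (hσ : orderOf σ = Fintype.card α)
include hp hσ

theorem card_normalizer_zpowers_quotient :
    Nat.card (normalizer (zpowers σ : Set (Perm α)) ⧸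
      (zpowers σ).subgroupOf (normalizer (zpowers σ : Set (Perm α)))) = Fintype.card α - 1 := by
  have hσc := cycleType_eq_singleton_card_of_orderOf_eq hp hσ
  have hcent : centralizer (zpowers σ : Set (Perm α)) = zpowers σ := by
    rw [zpowers_eq_closure, centralizer_closure, centralizer_singleton_eq_zpowers hσc,
      zpowers_eq_closure]
  have hsurj := normalizerMonoidHom_zpowers_surjective fun φ => isConj_iff_cycleType_eq.mpr <| by
    rw [hσc, cycleType_eq_singleton_card_of_orderOf_eq hp]
    rw [Subgroup.orderOf_coe, MulEquiv.orderOf_eq, Subgroup.orderOf_mk, hσ]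
  rw [Nat.card_congr (normalizerQuotientMulEquivMulAut hcent hsurj).toEquiv,
    IsCyclic.card_mulAut, Nat.card_zpowers, hσ, Nat.totient_prime hp]

theorem card_normalizer_zpowers :
    Nat.card (normalizer (zpowers σ : Set (Perm α))) = Fintype.card α * (Fintype.card α - 1) := by
  rw [card_eq_card_quotient_mul_card_subgroup ((zpowers σ).subgroupOf _),
    card_normalizer_zpowers_quotient hp hσ,
    Nat.card_congr (subgroupOfEquivOfLe le_normalizer).toEquiv, Nat.card_zpowers, hσ, mul_comm]

end

end Equiv.Perm

theorem stmt13 (p : ℕ) [Fact p.Prime] (S : Sylow p (Equiv.Perm (Fin p))) :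
    Nat.card (Subgroup.normalizer ((S : Subgroup (Equiv.Perm (Fin p))) : Set (Equiv.Perm (Fin p)))) = p * (p - 1) ∧
      Nat.card ((Subgroup.normalizer ((S : Subgroup (Equiv.Perm (Fin p))) : Set (Equiv.Perm (Fin p)))) ⧸
        (S : Subgroup (Equiv.Perm (Fin p))).subgroupOf
          (Subgroup.normalizer ((S : Subgroup (Equiv.Perm (Fin p))) : Set (Equiv.Perm (Fin p))))) = p - 1 := by
  have hS := card_sylow_eq_of_card_eq (Fintype.card_fin p) S
  obtain ⟨σ, hσ⟩ := (S : Subgroup (Perm (Fin p))).isCyclic_iff_exists_zpowers_eq_top.mp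
    (isCyclic_of_prime_card hS)
  have hp : (Fintype.card (Fin p)).Prime := (Fintype.card_fin p).symm ▸ Fact.out
  have hord : orderOf σ = Fintype.card (Fin p) := by
    rw [← Nat.card_zpowers, hσ, hS, Fintype.card_fin]
  rw [← hσ]
  simpa only [Fintype.card_fin] using
    And.intro (card_normalizer_zpowers hp hord) (card_normalizer_zpowers_quotient hp hord)
end

section
/- Let G be a finite group and suppose a Sylow p-subgroup S satisfies the trivial intersection property and G has no element of order pq for a prime q ≠ p. Then the normalizer N = N_G(S) is a Frobenius group with kernel S: the quotient W = N/S acts freely on S by conjugation, i.e., for each coset representative x ∈ N \ S and each nontrivial s ∈ S, x s x⁻¹ ≠ s. -/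
/-!
Suppose `x ∈ N_G(S) \ S` centralizes some `s ∈ S \ {1}`. A `p`-element of `N_G(S)` lies in `S`, so
the order of `x` has a prime factor `q ≠ p`. Suitable powers of `x` and `s` are then commuting
elements of orders `q` and `p`, whose product has order `pq`.
-/

theorem Commute.exists_orderOf_eq_mul {G : Type*} [Monoid G] {g h : G} (hgh : Commute g h)
    (hg : IsOfFinOrder g) (hh : IsOfFinOrder h) {p q : ℕ} (hp : p.Prime) (hq : q.Prime)
    (hpq : p ≠ q) (hpg : p ∣ orderOf g) (hqh : q ∣ orderOf h) :
    ∃ k : G, orderOf k = p * q := by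
  have hg' : orderOf (g ^ (orderOf g / p)) = p := orderOf_pow_orderOf_div hg.orderOf_pos.ne' hpg
  have hh' : orderOf (h ^ (orderOf h / q)) = q := orderOf_pow_orderOf_div hh.orderOf_pos.ne' hqh
  refine ⟨g ^ (orderOf g / p) * h ^ (orderOf h / q), ?_⟩
  rw [(hgh.pow_pow _ _).orderOf_mul_eq_mul_orderOf_of_coprime (by
    rw [hg', hh']; exact (Nat.coprime_primes hp hq).mpr hpq), hg', hh']

namespace Sylow

variable {p : ℕ} {G : Type*} [Group G] (S : Sylow p G)

theorem mem_of_mem_normalizer_of_orderOf_eq_pow {x : G}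
    (hx : x ∈ Subgroup.normalizer (S : Set G)) {k : ℕ} (hk : orderOf x = p ^ k) :
    x ∈ S := by
  have hpx : IsPGroup p (Subgroup.zpowers x) := .of_card (by rw [Nat.card_zpowers, hk])
  have hle : Subgroup.zpowers x ≤ S := by
    have := hpx.inf_normalizer_sylow S
    rwa [inf_eq_left.mpr (Subgroup.zpowers_le.mpr hx), eq_comm, inf_eq_left] at this
  exact hle (Subgroup.mem_zpowers x)

theorem exists_prime_ne_dvd_orderOf_of_mem_normalizer [Finite G] {x : G}
    (hx : x ∈ Subgroup.normalizer (S : Set G)) (hxS : x ∉ S) :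
    ∃ q : ℕ, q.Prime ∧ q ≠ p ∧ q ∣ orderOf x := by
  by_contra! h
  exact hxS <| S.mem_of_mem_normalizer_of_orderOf_eq_pow hx <|
    Nat.eq_prime_pow_of_unique_prime_dvd (orderOf_pos x).ne' fun hq hqx => by
      by_contra hqp
      exact h _ hq hqp hqx

end Sylow

theorem stmt17_general (p : ℕ) [Fact p.Prime] (G : Type*) [Group G] [Finite G]
    (hiso : ∀ g : G, ∀ q : ℕ, q.Prime → q ≠ p → orderOf g ≠ p * q)
    (S : Sylow p G) :
    ∀ x ∈ Subgroup.normalizer ((S : Subgroup G) : Set G), x ∉ (S : Subgroup G) →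
      ∀ s ∈ (S : Subgroup G), s ≠ 1 → x * s * x⁻¹ ≠ s := by
  intro x hx hxS s hs hs1 hxs
  obtain ⟨q, hq, hqp, hqx⟩ := S.exists_prime_ne_dvd_orderOf_of_mem_normalizer hx hxS
  have hps : p ∣ orderOf s := by
    simpa using S.isPGroup'.dvd_orderOf (g := ⟨s, hs⟩) (by simpa using hs1)
  have hsx : Commute s x := (mul_inv_eq_iff_eq_mul.mp hxs).symm
  obtain ⟨k, hk⟩ := hsx.exists_orderOf_eq_mul (isOfFinOrder_of_finite s)
    (isOfFinOrder_of_finite x) Fact.out hq hqp.symm hps hqx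
  exact hiso k q hq hqp hk

theorem stmt17 (p : ℕ) [Fact p.Prime] (G : Type*) [Group G] [Finite G]
    (hiso : ∀ g : G, ∀ q : ℕ, q.Prime → q ≠ p → orderOf g ≠ p * q)
    (S : Sylow p G)
    (hTI : ∀ g : G, g ∉ Subgroup.normalizer ((S : Subgroup G) : Set G) →
      (S : Subgroup G) ⊓ (S : Subgroup G).map (MulAut.conj g).toMonoidHom = ⊥) :
    ∀ x ∈ Subgroup.normalizer ((S : Subgroup G) : Set G), x ∉ (S : Subgroup G) →
      ∀ s ∈ (S : Subgroup G), s ≠ 1 → x * s * x⁻¹ ≠ s :=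
  stmt17_general p G hiso S
end
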